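/- arXiv:2310.15378 — 5 statements merged into one kernel-verified Lean document; each statement's English description precedes it below -/
import Mathlib

section
/- Let p be a prime, q = p^m, and k a positive integer dividing q − 1, with n = (q − 1)/k. Then the characteristic polynomial of the complex adjacency matrix A of the generalized Paley graph Γ(k,q) equals (X − n)·∏_{i=0}^{k−1} (X − η_i)^n in ℂ[X], where η_0, …, η_{k−1} are the cyclotomic Gaussian periods. (Equivalently, the spectrum of Γ(k,q) consists of n with multiplicity 1 together with each Gaussian period η_i repeated n times.) -/
/-!
`gpAdj F k` is the transpose of the circulant matrix of the indicator of `R_k` on the additive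
group of `F`. Circulant matrices are diagonalised by the additive characters `x ↦ ψ (a * x)`,
where `ψ x = exp (2πi Tr x / p)` is primitive, the eigenvalue belonging to `a` being
`∑ s ∈ R_k, ψ (a * s)`. For `a = 0` this is `#R_k = n`. For `a ≠ 0` it only depends on the coset
`a R_k`, and equals `η_i` on `ω^i R_k`; each of these `k` cosets has `n` elements.
-/

open Polynomial Finset
open scoped Classical

/-- The `i`-th cyclotomic Gaussian period for the pair `(k, q)`, where `q = #F`,
`ω` is a generator of `Fˣ` and the coset `ω^i⟨ω^k⟩` is described as
`{ω^i y^k : y ∈ Fˣ}`. -/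
noncomputable def gaussianPeriod (p : ℕ) (F : Type) [Field F] [Fintype F]
    [Algebra (ZMod p) F] (ω : Fˣ) (k i : ℕ) : ℂ :=
  ∑ x ∈ Finset.univ.filter (fun x : Fˣ => ∃ y : Fˣ, x = ω ^ i * y ^ k),
    Complex.exp (2 * Real.pi * Complex.I *
      ((Algebra.trace (ZMod p) F (x : F)).val : ℂ) / (p : ℂ))

/-- The complex adjacency matrix of the generalized Paley (di)graph `Γ(k,q)`:
there is an arrow from `u` to `v` iff `v - u` is a nonzero `k`-th power. -/
noncomputable def gpAdj (F : Type) [Field F] [Fintype F] (k : ℕ) : Matrix F F ℂ :=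
  Matrix.of fun u v => if ∃ x : Fˣ, v - u = (x : F) ^ k then 1 else 0

theorem Matrix.charpoly_circulant {R K : Type*} [CommRing R] [Fintype R] [DecidableEq R]
    [Field K] {ψ : AddChar R K} (hψ : ψ.IsPrimitive) (hR : (Fintype.card R : K) ≠ 0)
    (f : R → K) :
    (Matrix.circulant f).charpoly = ∏ a, (X - C (∑ w, f w * ψ (a * w))) := by
  -- The columns of `Q` are common eigenvectors of all circulants; by orthogonality of the
  -- characters `x ↦ ψ (a * x)`, `Q'` is the inverse of `Q`.
  set Q : Matrix R R K := Matrix.of fun u a => ψ (-(a * u))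
  set Q' : Matrix R R K := (Fintype.card R : K)⁻¹ • Matrix.of fun a v => ψ (a * v)
  set D : Matrix R R K := Matrix.diagonal fun a => ∑ w, f w * ψ (a * w)
  have hQ'Q : Q' * Q = 1 := by
    ext a b
    calc (Q' * Q) a b = (Fintype.card R : K)⁻¹ * ∑ u, ψ (u * (a - b)) := by
          simp only [Q, Q', Matrix.smul_apply, Matrix.mul_apply, Matrix.of_apply, smul_eq_mul,
            mul_sum, mul_assoc, ← AddChar.map_add_eq_mul]
          exact sum_congr rfl fun u _ => by ring_nf
      _ = (1 : Matrix R R K) a b := by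
          rw [AddChar.sum_mulShift _ hψ, Matrix.one_apply]
          by_cases h : a = b <;> simp [h, hR, sub_eq_zero]
  have hAQ : Matrix.circulant f * Q = Q * D := by
    ext u a
    rw [Matrix.mul_diagonal, Matrix.mul_apply, mul_sum]
    refine Fintype.sum_equiv (Equiv.subLeft u) _ _ fun v => ?_
    simp only [Q, Matrix.circulant_apply, Matrix.of_apply, Equiv.subLeft_apply,
      mul_left_comm _ (f _), ← AddChar.map_add_eq_mul]
    ring_nf
  have hA : Matrix.circulant f = Q * D * Q' := by
    rw [← hAQ, Matrix.mul_assoc, mul_eq_one_comm.mp hQ'Q, Matrix.mul_one]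
  rw [hA, Matrix.charpoly_mul_comm, ← Matrix.mul_assoc, hQ'Q, Matrix.one_mul,
    Matrix.charpoly_diagonal]

theorem Fintype.prod_eq_mul_prod_units {G₀ M : Type*} [GroupWithZero G₀] [Fintype G₀]
    [DecidableEq G₀] [CommMonoid M] (f : G₀ → M) : ∏ a, f a = f 0 * ∏ u : G₀ˣ, f u := by
  rw [Fintype.prod_eq_mul_prod_compl 0, prod_subtype (p := (· ≠ 0)) _ (fun a => by simp) f]
  congr 1
  exact (Fintype.prod_equiv unitsEquivNeZero _ _ fun _ => rfl).symm

theorem IsCyclic.card_powMonoidHom_range_of_dvd {G : Type*} [CommGroup G] [IsCyclic G] [Finite G]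
    {k : ℕ} (hk : k ∣ Nat.card G) :
    Nat.card (powMonoidHom k : G →* G).range = Nat.card G / k := by
  rw [IsCyclic.card_powMonoidHom_range, Nat.gcd_eq_right hk]

theorem prod_eq_prod_range_pow_of_mul_pow_invariant {G M : Type*} [CommGroup G] [Fintype G]
    [CommMonoid M] {ω : G} (hω : ∀ a, a ∈ Subgroup.zpowers ω) {k : ℕ}
    (hk : k ∣ Fintype.card G) (f : G → M) (hf : ∀ a y, f (a * y ^ k) = f a) :
    ∏ a, f a = ∏ i ∈ range k, f (ω ^ i) ^ (Fintype.card G / k) := by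
  have : IsCyclic G := ⟨ω, hω⟩
  set H := (powMonoidHom k : G →* G).range
  have hH : Fintype.card H = Fintype.card G / k := by
    simpa only [Nat.card_eq_fintype_card] using
      IsCyclic.card_powMonoidHom_range_of_dvd (G := G) (by rwa [Nat.card_eq_fintype_card])
  let e : Fin k × H → G := fun x => ω ^ (x.1 : ℕ) * x.2
  have he : e.Bijective := by
    rw [Fintype.bijective_iff_surjective_and_card]
    refine ⟨fun a => ?_, by rw [Fintype.card_prod, Fintype.card_fin, hH, Nat.mul_div_cancel' hk]⟩
    obtain ⟨j, rfl⟩ := mem_powers_iff_mem_zpowers.mpr (hω a)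
    refine ⟨(⟨j % k, Nat.mod_lt j (Nat.pos_of_dvd_of_pos hk Fintype.card_pos)⟩,
      ⟨(ω ^ (j / k)) ^ k, ω ^ (j / k), rfl⟩), ?_⟩
    simp only [e, ← pow_mul, ← pow_add, Nat.mod_add_div']
  calc ∏ a, f a = ∏ x : Fin k × H, f (ω ^ (x.1 : ℕ)) := by
        refine (Fintype.prod_bijective e he _ _ fun x => ?_).symm
        obtain ⟨y, hy⟩ := x.2.2
        simp only [e, ← hy, powMonoidHom_apply, hf]
    _ = ∏ i ∈ range k, f (ω ^ i) ^ (Fintype.card G / k) := by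
        rw [Fintype.prod_prod_type, ← Fin.prod_univ_eq_prod_range]
        simp only [prod_const, card_univ, hH]

theorem sum_ite_exists_units_pow_mul {M K : Type*} [CommMonoid M] [Fintype M] [Semiring K]
    (k : ℕ) (g : M → K) :
    ∑ w, (if ∃ x : Mˣ, w = (x : M) ^ k then 1 else 0) * g w
      = ∑ h : (powMonoidHom k : Mˣ →* Mˣ).range, g (h : Mˣ) := by
  simp only [ite_mul, one_mul, zero_mul]
  rw [← sum_filter]
  symm
  refine sum_bij (fun h _ => ((h : Mˣ) : M)) ?_ ?_ ?_ fun _ _ => rfl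
  · rintro ⟨_, x, rfl⟩ -
    exact mem_filter.mpr ⟨mem_univ _, x, Units.val_pow_eq_pow_val x k⟩
  · intro h₁ _ h₂ _ h
    exact Subtype.ext (Units.ext h)
  · intro w hw
    obtain ⟨x, rfl⟩ := (mem_filter.mp hw).2
    exact ⟨⟨x ^ k, x, rfl⟩, mem_univ _, by simp⟩

theorem sum_filter_exists_eq_mul_pow {G K : Type*} [CommGroup G] [Fintype G] [DecidableEq G]
    [AddCommMonoid K] (k : ℕ) (a : G) [DecidablePred fun x : G => ∃ y, x = a * y ^ k]
    (g : G → K) :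
    ∑ x ∈ univ.filter (fun x => ∃ y, x = a * y ^ k), g x
      = ∑ h : (powMonoidHom k : G →* G).range, g (a * h) := by
  symm
  refine sum_bij (fun h _ => a * h) ?_ ?_ ?_ fun _ _ => rfl
  · rintro ⟨_, y, rfl⟩ -
    exact mem_filter.mpr ⟨mem_univ _, y, rfl⟩
  · intro h₁ _ h₂ _ h
    exact Subtype.ext (mul_left_cancel h)
  · intro x hx
    obtain ⟨y, rfl⟩ := (mem_filter.mp hx).2
    exact ⟨⟨y ^ k, y, rfl⟩, mem_univ _, rfl⟩

theorem sum_range_powMonoidHom_mul_pow {G K : Type*} [CommGroup G] [Fintype G] [DecidableEq G]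
    [AddCommMonoid K] (k : ℕ) (a y : G) (g : G → K) :
    ∑ h : (powMonoidHom k : G →* G).range, g (a * y ^ k * h)
      = ∑ h : (powMonoidHom k : G →* G).range, g (a * h) :=
  Fintype.sum_equiv (Equiv.mulLeft ⟨y ^ k, y, rfl⟩) _ _ fun h => by simp [mul_assoc]

noncomputable def traceAddChar (p : ℕ) [NeZero p] (F : Type*) [Field F] [Algebra (ZMod p) F] :
    AddChar F ℂ :=
  ZMod.stdAddChar.compAddMonoidHom (Algebra.trace (ZMod p) F).toAddMonoidHom

theorem traceAddChar_apply (p : ℕ) [NeZero p] (F : Type*) [Field F] [Algebra (ZMod p) F]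
    (x : F) :
    traceAddChar p F x = Complex.exp (2 * Real.pi * Complex.I *
      ((Algebra.trace (ZMod p) F x).val : ℂ) / (p : ℂ)) := by
  rw [traceAddChar, AddChar.compAddMonoidHom_apply, ZMod.stdAddChar_apply, ZMod.toCircle_apply]
  rfl

theorem isPrimitive_traceAddChar (p : ℕ) [Fact p.Prime] (F : Type*) [Field F] [Finite F]
    [Algebra (ZMod p) F] : (traceAddChar p F).IsPrimitive := by
  refine AddChar.IsPrimitive.of_ne_one (AddChar.ne_one_iff.mpr ?_)
  obtain ⟨a, ha⟩ := DFunLike.ne_iff.mp (Algebra.trace_ne_zero (ZMod p) F)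
  refine ⟨a, fun h => ha ?_⟩
  rw [traceAddChar, AddChar.compAddMonoidHom_apply,
    ← AddChar.map_zero_eq_one (ZMod.stdAddChar (N := p))] at h
  exact ZMod.injective_stdAddChar h

theorem stmt_0_general (p m k n : ℕ) (hp : p.Prime)
    (F : Type) [Field F] [Fintype F] [Algebra (ZMod p) F]
    (hF : Fintype.card F = p ^ m)
    (ω : Fˣ) (hω : ∀ u : Fˣ, u ∈ Subgroup.zpowers ω)
    (hkq : k ∣ p ^ m - 1) (hn : n = (p ^ m - 1) / k) :
    (gpAdj F k).charpoly =
      (X - C (n : ℂ)) *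
        ∏ i ∈ Finset.range k, (X - C (gaussianPeriod p F ω k i)) ^ n := by
  have := Fact.mk hp
  set H := (powMonoidHom k : Fˣ →* Fˣ).range
  have hcard : Fintype.card Fˣ = p ^ m - 1 := by rw [Fintype.card_units, hF]
  let f : F → ℂ := fun w => if ∃ x : Fˣ, w = (x : F) ^ k then 1 else 0
  rw [show gpAdj F k = (Matrix.circulant f).transpose from rfl, Matrix.charpoly_transpose,
    Matrix.charpoly_circulant (isPrimitive_traceAddChar p F)
      (Nat.cast_ne_zero.mpr Fintype.card_ne_zero), Fintype.prod_eq_mul_prod_units]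
  simp only [f, sum_ite_exists_units_pow_mul]
  congr 1
  · have hH : Nat.card H = n := by
      rw [IsCyclic.card_powMonoidHom_range_of_dvd (by rwa [Nat.card_eq_fintype_card, hcard]),
        Nat.card_eq_fintype_card, hcard, hn]
    simp only [zero_mul, AddChar.map_zero_eq_one, sum_const, card_univ, nsmul_eq_mul, mul_one]
    rw [Fintype.card_eq_nat_card, hH]
  · rw [prod_eq_prod_range_pow_of_mul_pow_invariant hω (hcard ▸ hkq), hcard, ← hn]
    · refine prod_congr rfl fun i _ => ?_
      rw [gaussianPeriod, sum_filter_exists_eq_mul_pow]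
      simp [traceAddChar_apply]
    · intro a y
      simp only [← Units.val_mul]
      exact congrArg (fun s => X - C s)
        (sum_range_powMonoidHom_mul_pow k a y fun x => traceAddChar p F x)

theorem stmt_0 (p m k n : ℕ) (hp : p.Prime) (hm : 0 < m)
    (F : Type) [Field F] [Fintype F] [Algebra (ZMod p) F]
    (hF : Fintype.card F = p ^ m)
    (ω : Fˣ) (hω : ∀ u : Fˣ, u ∈ Subgroup.zpowers ω)
    (hk : 0 < k) (hkq : k ∣ p ^ m - 1) (hn : n = (p ^ m - 1) / k) :
    (gpAdj F k).charpoly =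
      (X - C (n : ℂ)) *
        ∏ i ∈ Finset.range k, (X - C (gaussianPeriod p F ω k i)) ^ n :=
  stmt_0_general p m k n hp F hF ω hω hkq hn
end

section
/- Let p be a prime, q = p^m, and k a positive integer dividing q − 1 with n = (q − 1)/k, and assume q is even or k ∣ (q − 1)/2, so that R_k = −R_k and Γ(k,q) is a simple graph. Then the simple graph Γ(k,q) is connected if and only if η_i ≠ n for every i ∈ {0, …, k − 1}, i.e. no cyclotomic Gaussian period equals the regularity degree n. -/
open Polynomial Finset
open scoped Classical

/-- The generalized Paley graph `Γ(k,q)` as a simple graph (when the connection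
set is symmetric, `fromRel` gives exactly the intended graph). -/
def gpGraph (F : Type) [Field F] (k : ℕ) : SimpleGraph F :=
  SimpleGraph.fromRel fun u v => ∃ x : Fˣ, v - u = (x : F) ^ k

/-!
`Γ(k,q)` is the Cayley graph of `(𝔽_q, +)` on the `k`-th powers `R_k`, so it is connected iff
`R_k` spans `𝔽_q` over `𝔽_p`. Since the trace form is nondegenerate, this fails iff some
`a ≠ 0` has `Tr(a x) = 0` for all `x ∈ R_k`, i.e. iff the trace vanishes on the whole coset
`a R_k = ω^i R_k` for some `i < k`. As the period `η_i` is a sum of `n` roots of unity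
`ζ_p^{Tr x}`, that happens exactly when `η_i = n`.
-/

namespace SimpleGraph

variable {M : Type*} [Group M] {s : Set M}

@[to_additive]
lemma Reachable.mulCayley_mul_left {u v : M} (h : (mulCayley s).Reachable u v) (d : M) :
    (mulCayley s).Reachable (d * u) (d * v) :=
  h.map ⟨(d * ·), mulCayley_adj_mul_iff_right.2⟩

@[to_additive]
lemma Walk.inv_mul_mem_closure {u v : M} (w : (mulCayley s).Walk u v) :
    u⁻¹ * v ∈ Subgroup.closure s := by
  induction w with
  | nil => simp
  | @cons a b _ hab _ ih =>
    have hab' : a⁻¹ * b ∈ Subgroup.closure s := by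
      rcases ((mulCayley_adj s a b).1 hab).2 with h | h
      · exact Subgroup.subset_closure h
      · simpa using inv_mem (Subgroup.subset_closure h)
    simpa [mul_assoc] using mul_mem hab' ih

@[to_additive]
lemma mulCayley_connected_iff : (mulCayley s).Connected ↔ Subgroup.closure s = ⊤ := by
  refine ⟨fun h ↦ eq_top_iff.2 fun v _ ↦ ?_, fun h ↦ ?_⟩
  · simpa using (h.preconnected 1 v).some.inv_mul_mem_closure
  · have reach (v : M) : (mulCayley s).Reachable 1 v := by
      induction (h ▸ Subgroup.mem_top v : v ∈ Subgroup.closure s) using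
        Subgroup.closure_induction with
      | mem g hg =>
        by_cases hg1 : g = 1
        · rw [hg1]
        · exact Adj.reachable ((mulCayley_adj s 1 g).2 ⟨Ne.symm hg1, Or.inl (by simpa)⟩)
      | one => rfl
      | mul x y _ _ hx hy => exact hx.trans (by simpa using hy.mulCayley_mul_left x)
      | inv x _ hx => simpa using (hx.mulCayley_mul_left x⁻¹).symm
    exact Connected.mk fun u v ↦ (reach u).symm.trans (reach v)

end SimpleGraph

lemma gpGraph_eq_addCayley (F : Type) [Field F] (k : ℕ) :
    gpGraph F k = SimpleGraph.addCayley (Set.range fun y : Fˣ ↦ (y : F) ^ k) := by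
  ext u v
  simp only [gpGraph, SimpleGraph.addCayley, SimpleGraph.fromRel_adj, Set.exists_range_iff,
    sub_eq_iff_eq_add', eq_comm (a := v), eq_comm (a := u)]

lemma Submodule.span_zmod_eq_addSubgroupClosure {M : Type*} [AddCommGroup M] (n : ℕ)
    [Module (ZMod n) M] (s : Set M) :
    (span (ZMod n) s).toAddSubgroup = AddSubgroup.closure s :=
  le_antisymm
    (toAddSubgroup_mono <|
      (span_le (p := AddSubgroup.toZModSubmodule n (AddSubgroup.closure s))).2
        AddSubgroup.subset_closure)
    ((AddSubgroup.closure_le _).2 subset_span)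

lemma span_eq_top_iff_forall_trace_mul_eq_zero {K L : Type*} [Field K] [Field L] [Algebra K L]
    [FiniteDimensional K L] [Algebra.IsSeparable K L] (s : Set L) :
    Submodule.span K s = ⊤ ↔ ∀ a : L, (∀ x ∈ s, Algebra.trace K L (a * x) = 0) → a = 0 := by
  let e := (Algebra.traceForm K L).toDual (traceForm_nondegenerate K L)
  rw [← Submodule.dualAnnihilator_eq_bot_iff, Submodule.eq_bot_iff]
  refine (e.toEquiv.forall_congr fun {a} ↦ ?_).symm
  rw [Submodule.mem_dualAnnihilator]
  exact imp_congr (Submodule.span_le (p := LinearMap.ker (e a))).symm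
    (map_eq_zero_iff e e.injective).symm

section CyclotomicClass

variable {G : Type*} [CommGroup G] [Fintype G]

/-- The coset `ω^i R_k`, written as the summation range of `gaussianPeriod`. -/
noncomputable def cyclotomicClass (ω : G) (k i : ℕ) : Finset G :=
  univ.filter fun x ↦ ∃ y : G, x = ω ^ i * y ^ k

variable {ω : G} {k i : ℕ}

@[simp]
lemma mem_cyclotomicClass {x : G} : x ∈ cyclotomicClass ω k i ↔ ∃ y, x = ω ^ i * y ^ k := by
  simp [cyclotomicClass]

lemma cyclotomicClass_eq_map_range :
    cyclotomicClass ω k i =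
      (univ.filter (· ∈ (powMonoidHom k : G →* G).range)).map (mulLeftEmbedding (ω ^ i)) := by
  ext x
  simp [eq_comm]

lemma card_cyclotomicClass [IsCyclic G] (hk : k ∣ Fintype.card G) :
    #(cyclotomicClass ω k i) = Fintype.card G / k := by
  rw [cyclotomicClass_eq_map_range, card_map, ← Fintype.card_subtype,
    ← Nat.card_eq_fintype_card, IsCyclic.card_powMonoidHom_range, Nat.card_eq_fintype_card,
    Nat.gcd_eq_right hk]

lemma mem_cyclotomicClass_iff_of_mem {a x : G} (ha : a ∈ cyclotomicClass ω k i) :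
    x ∈ cyclotomicClass ω k i ↔ ∃ y, x = a * y ^ k := by
  obtain ⟨z, rfl⟩ := mem_cyclotomicClass.1 ha
  refine mem_cyclotomicClass.trans
    ⟨fun ⟨y, hy⟩ ↦ ⟨z⁻¹ * y, ?_⟩, fun ⟨y, hy⟩ ↦ ⟨z * y, ?_⟩⟩ <;>
    subst hy <;> simp only [mul_pow, inv_pow] <;> group

lemma exists_lt_mem_cyclotomicClass (hω : ∀ u : G, u ∈ Subgroup.zpowers ω) (hk : 0 < k)
    (a : G) : ∃ i < k, a ∈ cyclotomicClass ω k i := by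
  obtain ⟨j, rfl⟩ := (isOfFinOrder_of_finite ω).mem_powers_iff_mem_zpowers.2 (hω a)
  refine ⟨j % k, Nat.mod_lt j hk, mem_cyclotomicClass.2 ⟨ω ^ (j / k), ?_⟩⟩
  rw [← pow_mul, ← pow_add, Nat.mod_add_div' j k]

lemma exists_forall_mul_pow_iff (hω : ∀ u : G, u ∈ Subgroup.zpowers ω) (hk : 0 < k)
    (P : G → Prop) :
    (∃ a, ∀ y, P (a * y ^ k)) ↔ ∃ i < k, ∀ x ∈ cyclotomicClass ω k i, P x := by
  constructor
  · rintro ⟨a, ha⟩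
    obtain ⟨i, hik, hai⟩ := exists_lt_mem_cyclotomicClass hω hk a
    refine ⟨i, hik, fun x hx ↦ ?_⟩
    obtain ⟨y, rfl⟩ := (mem_cyclotomicClass_iff_of_mem hai).1 hx
    exact ha y
  · rintro ⟨i, -, hi⟩
    exact ⟨ω ^ i, fun y ↦ hi _ (mem_cyclotomicClass.2 ⟨y, rfl⟩)⟩

end CyclotomicClass

lemma Complex.sum_eq_card_iff_of_norm_le_one {ι : Type*} {s : Finset ι} {z : ι → ℂ}
    (hz : ∀ i ∈ s, ‖z i‖ ≤ 1) : ∑ i ∈ s, z i = #s ↔ ∀ i ∈ s, z i = 1 := by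
  refine ⟨fun h ↦ ?_, fun h ↦ by simp [sum_congr rfl h]⟩
  have hre : ∑ i ∈ s, (z i).re = ∑ i ∈ s, (1 : ℝ) := by simpa using congrArg re h
  have hre_le (i) (hi : i ∈ s) : (z i).re ≤ 1 := (re_le_norm _).trans (hz i hi)
  intro i hi
  have h1 : (z i).re = 1 := (sum_eq_sum_iff_of_le hre_le).1 hre i hi
  have h2 : (z i).im = 0 :=
    abs_re_eq_norm.1 ((abs_re_le_norm _).antisymm (by rw [h1, abs_one]; exact hz i hi))
  exact Complex.ext h1 h2

section GaussianPeriod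

variable {p : ℕ} [NeZero p] {F : Type} [Field F] [Fintype F] [Algebra (ZMod p) F]

lemma gaussianPeriod_eq_sum_stdAddChar (ω : Fˣ) (k i : ℕ) :
    gaussianPeriod p F ω k i =
      ∑ x ∈ cyclotomicClass ω k i, ZMod.stdAddChar (Algebra.trace (ZMod p) F x) := by
  refine sum_congr (by ext; simp) fun x _ ↦ ?_
  rw [ZMod.stdAddChar_apply, ZMod.toCircle_apply]

lemma gaussianPeriod_eq_card_iff (ω : Fˣ) (k i : ℕ) :
    gaussianPeriod p F ω k i = #(cyclotomicClass ω k i) ↔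
      ∀ x ∈ cyclotomicClass ω k i, Algebra.trace (ZMod p) F x = 0 := by
  rw [gaussianPeriod_eq_sum_stdAddChar, Complex.sum_eq_card_iff_of_norm_le_one
    fun _ _ ↦ by rw [ZMod.stdAddChar_apply, Circle.norm_coe]]
  simp only [← ZMod.injective_stdAddChar.eq_iff, AddChar.map_zero_eq_one]

end GaussianPeriod

theorem stmt_2_general (p m k n : ℕ) (hp : p.Prime)
    (F : Type) [Field F] [Fintype F] [Algebra (ZMod p) F]
    (hF : Fintype.card F = p ^ m)
    (ω : Fˣ) (hω : ∀ u : Fˣ, u ∈ Subgroup.zpowers ω)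
    (hk : 0 < k) (hkq : k ∣ p ^ m - 1) (hn : n = (p ^ m - 1) / k) :
    (gpGraph F k).Connected ↔
      ∀ i < k, gaussianPeriod p F ω k i ≠ (n : ℂ) := by
  have : Fact p.Prime := ⟨hp⟩
  have hcard (i : ℕ) : #(cyclotomicClass ω k i) = n := by
    rw [card_cyclotomicClass (by rwa [Fintype.card_units, hF]), Fintype.card_units, hF, hn]
  rw [gpGraph_eq_addCayley, SimpleGraph.addCayley_connected_iff,
    ← Submodule.span_zmod_eq_addSubgroupClosure p, Submodule.toAddSubgroup_eq_top,
    span_eq_top_iff_forall_trace_mul_eq_zero]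
  have hη (i : ℕ) : gaussianPeriod p F ω k i = n ↔
      ∀ x ∈ cyclotomicClass ω k i, Algebra.trace (ZMod p) F x = 0 :=
    hcard i ▸ gaussianPeriod_eq_card_iff ω k i
  have hdegenerate : (∃ a ≠ 0, ∀ y : Fˣ, Algebra.trace (ZMod p) F (a * y ^ k) = 0) ↔
      ∃ i < k, ∀ x ∈ cyclotomicClass ω k i, Algebra.trace (ZMod p) F x = 0 := by
    rw [← Units.exists_iff_ne_zero, ← exists_forall_mul_pow_iff hω hk]
    simp only [Units.val_mul, Units.val_pow_eq_pow_val]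
  simpa only [Set.forall_mem_range, ne_eq, hη, not_exists, not_and, not_imp_not] using
    not_congr hdegenerate

theorem stmt_2 (p m k n : ℕ) (hp : p.Prime) (hm : 0 < m)
    (F : Type) [Field F] [Fintype F] [Algebra (ZMod p) F]
    (hF : Fintype.card F = p ^ m)
    (ω : Fˣ) (hω : ∀ u : Fˣ, u ∈ Subgroup.zpowers ω)
    (hk : 0 < k) (hkq : k ∣ p ^ m - 1) (hn : n = (p ^ m - 1) / k)
    (hsym : Even (p ^ m) ∨ k ∣ (p ^ m - 1) / 2) :
    (gpGraph F k).Connected ↔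
      ∀ i < k, gaussianPeriod p F ω k i ≠ (n : ℂ) :=
  stmt_2_general p m k n hp F hF ω hω hk hkq hn
end

section
/- Let p be a prime and let k, t, s be positive integers such that k divides p^t + 1. If m = 2ts, then k divides (p^m − 1)/(p − 1). Consequently, every semiprimitive generalized Paley graph Γ(k, p^m) has integral spectrum. -/
/-!
Since `2t ∣ m`, `(p - 1)(p^t + 1) ∣ p^(2t) - 1 ∣ p^m - 1`, so `p^t + 1` divides
`Q = (p^m - 1)/(p - 1)`. The group `F^×` is cyclic of order `(p - 1) Q` and `k ∣ Q`, so every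
element of `F_p^×` (killed by `p - 1`) is a `k`-th power in `F`; hence each coset `ω^i (F^×)^k` is
stable under `F_p^×`. The trace is `F_p`-linear, so its fibres over the nonzero elements of `F_p`
inside such a coset all have the same size `n`, and the Gaussian period, a sum of a nontrivial
additive character of `F_p` over these fibres, collapses to `#(fibre over 0) - n`.
-/

open Polynomial Finset
open scoped Classical

lemma Nat.pow_add_one_dvd_pow_sub_one_div (p : ℕ) {t m : ℕ} (htm : 2 * t ∣ m) :
    p ^ t + 1 ∣ (p ^ m - 1) / (p - 1) := by
  apply Nat.dvd_div_of_mul_dvd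
  calc (p - 1) * (p ^ t + 1) ∣ (p ^ t - 1) * (p ^ t + 1) :=
        mul_dvd_mul_right (Nat.sub_one_dvd_pow_sub_one p t) _
    _ = (p ^ t) ^ 2 - 1 ^ 2 := by rw [Nat.sq_sub_sq, mul_comm]
    _ = p ^ (2 * t) - 1 := by rw [one_pow, ← pow_mul, mul_comm]
    _ ∣ p ^ m - 1 := Nat.pow_sub_one_dvd_pow_sub_one p htm

lemma IsCyclic.exists_pow_eq_of_pow_eq_one {G : Type*} [CommGroup G] [IsCyclic G] [Finite G]
    {e Q k : ℕ} (hcard : Nat.card G = e * Q) (hkQ : k ∣ Q) {u : G} (hu : u ^ e = 1) :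
    ∃ w : G, w ^ k = u := by
  have hQ : 0 < Q := Nat.pos_of_mul_pos_left (hcard ▸ Nat.card_pos)
  have hrange : (powMonoidHom Q : G →* G).range = (powMonoidHom e).ker := by
    refine Subgroup.eq_of_le_of_card_ge ?_ ?_
    · rintro _ ⟨v, rfl⟩
      rw [MonoidHom.mem_ker, powMonoidHom_apply, powMonoidHom_apply, ← pow_mul, mul_comm, ← hcard,
        pow_card_eq_one']
    · rw [IsCyclic.card_powMonoidHom_ker, IsCyclic.card_powMonoidHom_range, hcard,
        Nat.gcd_mul_left_left, Nat.gcd_mul_right_left, Nat.mul_div_cancel _ hQ]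
  obtain ⟨v, hv⟩ : u ∈ (powMonoidHom Q : G →* G).range := hrange ▸ hu
  obtain ⟨j, rfl⟩ := hkQ
  exact ⟨v ^ j, by rw [← pow_mul, mul_comm]; exact hv⟩

lemma AddChar.sum_comp_eq_card_fiber_zero_sub {A ι : Type*} [AddGroup A] [Fintype A]
    (ψ : AddChar A ℂ) (hψ : ψ ≠ 1) (S : Finset ι) (τ : ι → A) (n : ℕ)
    (hn : ∀ a ≠ 0, #{x ∈ S | τ x = a} = n) :
    ∑ x ∈ S, ψ (τ x) = #{x ∈ S | τ x = 0} - n := by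
  have hfiber (a : A) : ∑ x ∈ S with τ x = a, ψ (τ x) = #{x ∈ S | τ x = a} * ψ a := by
    rw [Finset.sum_congr rfl fun x hx => by rw [(Finset.mem_filter.mp hx).2], Finset.sum_const,
      nsmul_eq_mul]
  have hsum_ne_zero : ∑ a ∈ univ.erase 0, ψ a = -1 := by
    have h := Finset.add_sum_erase _ ψ (mem_univ (0 : A))
    rw [AddChar.sum_eq_zero_of_ne_one hψ, AddChar.map_zero_eq_one] at h
    linear_combination h
  rw [← Finset.sum_fiberwise S τ, Fintype.sum_congr _ _ hfiber,
    ← Finset.add_sum_erase _ _ (mem_univ 0),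
    Finset.sum_congr rfl fun a ha => by rw [hn a (Finset.ne_of_mem_erase ha)],
    ← Finset.mul_sum, hsum_ne_zero, AddChar.map_zero_eq_one]
  ring

lemma card_filter_linearMap_eq_of_units_mul_mem {K L : Type*} [Field K] [Field L] [Algebra K L]
    (f : L →ₗ[K] K) (S : Finset Lˣ)
    (hS : ∀ c : Kˣ, ∀ x ∈ S, Units.map (algebraMap K L).toMonoidHom c * x ∈ S)
    {a : K} (ha : a ≠ 0) :
    #(S.filter fun x : Lˣ => f x = a) = #(S.filter fun x : Lˣ => f x = 1) := by
  set α := Units.map (algebraMap K L).toMonoidHom (Units.mk0 a ha)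
  have hf (c : Kˣ) (x : Lˣ) : f ↑(Units.map (algebraMap K L).toMonoidHom c * x) = c * f x := by
    rw [Units.val_mul, Units.coe_map, RingHom.toMonoidHom_eq_coe, MonoidHom.coe_coe,
      ← Algebra.smul_def, map_smul, smul_eq_mul]
  apply Finset.card_nbij' (α⁻¹ * ·) (α * ·)
  · intro x hx
    simp only [Finset.coe_filter, Set.mem_ofPred_eq] at hx ⊢
    refine ⟨by simpa [α, map_inv] using hS (Units.mk0 a ha)⁻¹ x hx.1, ?_⟩
    rw [← map_inv, hf, hx.2, Units.val_inv_eq_inv_val, Units.val_mk0, inv_mul_cancel₀ ha]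
  · intro x hx
    simp only [Finset.coe_filter, Set.mem_ofPred_eq] at hx ⊢
    exact ⟨hS _ x hx.1, by rw [hf, hx.2, Units.val_mk0, mul_one]⟩
  · exact fun x _ => by simp
  · exact fun x _ => by simp

lemma ZMod.stdAddChar_ne_one {N : ℕ} [NeZero N] [Nontrivial (ZMod N)] :
    (stdAddChar : AddChar (ZMod N) ℂ) ≠ 1 :=
  AddChar.ne_one_iff.mpr
    ⟨1, fun h => one_ne_zero (injective_stdAddChar (h.trans (AddChar.map_zero_eq_one _).symm))⟩

lemma FiniteField.exists_pow_eq_units_map_of_dvd {p m k : ℕ} [Fact p.Prime]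
    {F : Type*} [Field F] [Fintype F] [Algebra (ZMod p) F] (hF : Fintype.card F = p ^ m)
    (hk : k ∣ (p ^ m - 1) / (p - 1)) (c : (ZMod p)ˣ) :
    ∃ w : Fˣ, w ^ k = Units.map (algebraMap (ZMod p) F).toMonoidHom c := by
  have hcard : Nat.card Fˣ = (p - 1) * ((p ^ m - 1) / (p - 1)) := by
    rw [Nat.mul_div_cancel' (Nat.sub_one_dvd_pow_sub_one p m), Nat.card_eq_fintype_card,
      Fintype.card_units, hF]
  exact IsCyclic.exists_pow_eq_of_pow_eq_one hcard hk
    (by rw [← map_pow, ZMod.units_pow_card_sub_one_eq_one, map_one])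

theorem stmt_11_general (p k t s m : ℕ) (hp : p.Prime)
    (hdvd : k ∣ p ^ t + 1) (hm : m = 2 * t * s)
    (F : Type) [Field F] [Fintype F] [Algebra (ZMod p) F]
    (hF : Fintype.card F = p ^ m)
    (ω : Fˣ) :
    k ∣ (p ^ m - 1) / (p - 1) ∧
      ∀ i < k, ∃ z : ℤ, gaussianPeriod p F ω k i = (z : ℂ) := by
  have hkQ : k ∣ (p ^ m - 1) / (p - 1) :=
    hdvd.trans (Nat.pow_add_one_dvd_pow_sub_one_div p ⟨s, hm⟩)
  refine ⟨hkQ, fun i _ => ?_⟩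
  have : Fact p.Prime := ⟨hp⟩
  set S : Finset Fˣ := {x | ∃ y : Fˣ, x = ω ^ i * y ^ k}
  have hS (c : (ZMod p)ˣ) (x : Fˣ) (hx : x ∈ S) :
      Units.map (algebraMap (ZMod p) F).toMonoidHom c * x ∈ S := by
    obtain ⟨w, hw⟩ := FiniteField.exists_pow_eq_units_map_of_dvd hF hkQ c
    obtain ⟨y, rfl⟩ := (Finset.mem_filter.mp hx).2
    exact Finset.mem_filter.mpr ⟨mem_univ _, w * y, by rw [← hw, mul_pow, mul_left_comm]⟩
  have hperiod :
      gaussianPeriod p F ω k i = ∑ x ∈ S, ZMod.stdAddChar (Algebra.trace (ZMod p) F x) := by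
    simp only [gaussianPeriod, ZMod.stdAddChar_apply, ZMod.toCircle_apply]
    rfl
  rw [hperiod, AddChar.sum_comp_eq_card_fiber_zero_sub _ ZMod.stdAddChar_ne_one S _ _
    fun a ha => card_filter_linearMap_eq_of_units_mul_mem _ S hS ha]
  exact ⟨(_ : ℕ) - (_ : ℕ), by push_cast; rfl⟩

theorem stmt_11 (p k t s m : ℕ) (hp : p.Prime)
    (hk : 0 < k) (ht : 0 < t) (hs : 0 < s)
    (hdvd : k ∣ p ^ t + 1) (hm : m = 2 * t * s)
    (F : Type) [Field F] [Fintype F] [Algebra (ZMod p) F]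
    (hF : Fintype.card F = p ^ m)
    (ω : Fˣ) (hω : ∀ u : Fˣ, u ∈ Subgroup.zpowers ω) :
    k ∣ (p ^ m - 1) / (p - 1) ∧
      ∀ i < k, ∃ z : ℤ, gaussianPeriod p F ω k i = (z : ℂ) :=
  stmt_11_general p k t s m hp hdvd hm F hF ω
end

section
/- Let p be an odd prime and m ≥ 1, and set k = (p^m + 1)/2 and q = p^{2m}. Then the simple graph Γ(k, q) is isomorphic to the rook's graph K_{p^m} □ K_{p^m}, the box (Cartesian) product of two complete graphs on p^m vertices (equivalently, the Hamming graph H(2, p^m)). -/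
open Polynomial Finset
open scoped Classical

/-! Write `n = p ^ m` and `k = (n + 1) / 2`. The unit group of `F` is cyclic of order
`n ^ 2 - 1 = k * (2 * (n - 1))`, so a nonzero `w` is a `k`-th power iff `w ^ (2 * (n - 1)) = 1`,
i.e. iff `w ^ n = ±w`. The Frobenius `σ x = x ^ n` is an involution of `F`, so `F` is the
direct sum of its `±1`-eigenspaces `K` and `L` via `x ↦ ((x + σ x) / 2, (x - σ x) / 2)`.
Each of `K`, `L` is the root set of `X ^ n ∓ X`, hence has at most `n` elements, while
`|K| * |L| = n ^ 2`; so both have `n` elements. In these coordinates `u ~ v` iff `v - u` is a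
nonzero element of `K ∪ L`, i.e. iff `u` and `v` differ in exactly one coordinate: this is the
rook's graph `K_n □ K_n`. -/

lemma IsCyclic.exists_pow_eq_iff_pow_eq_one {G : Type*} [CommGroup G] [IsCyclic G] [Finite G]
    {k : ℕ} (hk : k ∣ Nat.card G) (x : G) :
    (∃ y : G, y ^ k = x) ↔ x ^ (Nat.card G / k) = 1 := by
  suffices (powMonoidHom k : G →* G).range = (powMonoidHom (Nat.card G / k)).ker from
    SetLike.ext_iff.mp this x
  refine Subgroup.eq_of_le_of_card_ge ?_ ?_
  · rintro _ ⟨y, rfl⟩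
    simp [← pow_mul, Nat.mul_div_cancel' hk, pow_card_eq_one']
  · rw [IsCyclic.card_powMonoidHom_range, IsCyclic.card_powMonoidHom_ker,
      Nat.gcd_eq_right hk, Nat.gcd_eq_right (Nat.div_dvd_of_dvd hk)]

namespace SimpleGraph

def Iso.boxProd {α α' β β' : Type*} {G : SimpleGraph α} {G' : SimpleGraph α'}
    {H : SimpleGraph β} {H' : SimpleGraph β'} (f : G ≃g G') (g : H ≃g H') :
    G.boxProd H ≃g G'.boxProd H' where
  toEquiv := f.toEquiv.prodCongr g.toEquiv
  map_rel_iff' := by simp [boxProd_adj, Iso.map_adj_iff]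

def Iso.boxProdTopOfAddEquiv {A B C : Type*} [AddGroup A] [AddGroup B] [AddGroup C]
    (G : SimpleGraph A) (e : A ≃+ B × C)
    (hG : ∀ u v, G.Adj u v ↔ u ≠ v ∧ ((e (v - u)).1 = 0 ∨ (e (v - u)).2 = 0)) :
    G ≃g (⊤ : SimpleGraph B).boxProd (⊤ : SimpleGraph C) where
  toEquiv := e.toEquiv
  map_rel_iff' {u v} := by
    rw [hG, ← e.injective.ne_iff, map_sub, Ne, Prod.ext_iff]
    simp only [AddEquiv.toEquiv_eq_coe, EquivLike.coe_coe, boxProd_adj, top_adj,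
      Prod.fst_sub, Prod.snd_sub, sub_eq_zero]
    tauto

end SimpleGraph

namespace RingHom

variable {F : Type*} [Field F] (σ : F →+* F) (hσ : Function.Involutive σ) (h2 : (2 : F) ≠ 0)

def eqLocusProdEquivOfInvolutive :
    F ≃+ (σ : F →+ F).eqLocus (.id F) × (σ : F →+ F).eqLocus (-.id F) where
  toFun x := (⟨(x + σ x) / 2, by
      change σ _ = _; simp [map_div₀, map_ofNat, hσ x, add_comm]⟩, ⟨(x - σ x) / 2, by
      change σ _ = _; simp [map_div₀, map_ofNat, hσ x]; ring⟩)
  invFun y := y.1 + y.2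
  left_inv x := by field_simp; ring
  right_inv := by
    rintro ⟨⟨a, ha : σ a = a⟩, ⟨b, hb : σ b = -b⟩⟩
    ext <;> simp [ha, hb] <;> field_simp <;> ring
  map_add' x y := by ext <;> simp <;> ring

lemma eqLocusProdEquivOfInvolutive_fst_eq_zero_iff (x : F) :
    (σ.eqLocusProdEquivOfInvolutive hσ h2 x).1 = 0 ↔ σ x = -x := by
  simp [eqLocusProdEquivOfInvolutive, Subtype.ext_iff, h2, add_eq_zero_iff_eq_neg']

lemma eqLocusProdEquivOfInvolutive_snd_eq_zero_iff (x : F) :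
    (σ.eqLocusProdEquivOfInvolutive hσ h2 x).2 = 0 ↔ σ x = x := by
  simp [eqLocusProdEquivOfInvolutive, Subtype.ext_iff, h2, sub_eq_zero]
  exact eq_comm

end RingHom

namespace FiniteField

variable {F : Type*} [Field F] [Fintype F] {n : ℕ}

lemma card_pow_eq_mul_le (hn : 2 ≤ n) (c : F) : Nat.card {x : F // x ^ n = c * x} ≤ n := by
  have hdeg : (X ^ n - C c * X : F[X]).natDegree = n := by
    rw [natDegree_sub_eq_left_of_natDegree_lt] <;> rw [natDegree_X_pow]
    exact (natDegree_C_mul_le c X).trans_lt (natDegree_X_le.trans_lt (by omega))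
  have hne : (X ^ n - C c * X : F[X]) ≠ 0 := by
    intro h; rw [h, natDegree_zero] at hdeg; omega
  rw [Nat.card_eq_fintype_card, Fintype.card_subtype]
  refine (card_le_degree_of_subset_roots fun x hx => ?_).trans hdeg.le
  simpa [mem_roots hne, sub_eq_zero] using hx

variable (hF : Fintype.card F = n ^ 2)
include hF

lemma pow_pow_eq_self_of_card_eq_sq (x : F) : (x ^ n) ^ n = x := by
  rw [← pow_mul, ← sq, ← hF, pow_card]

lemma involutive_of_card_eq_sq {σ : F →+* F} (hσ : ∀ x, σ x = x ^ n) :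
    Function.Involutive σ :=
  fun x => by rw [hσ, hσ, pow_pow_eq_self_of_card_eq_sq hF]

lemma card_eqLocus_eq_of_card_eq_sq (σ : F →+* F) (hσ : ∀ x, σ x = x ^ n)
    (h2 : (2 : F) ≠ 0) :
    Nat.card ((σ : F →+ F).eqLocus (.id F)) = n ∧
      Nat.card ((σ : F →+ F).eqLocus (-.id F)) = n := by
  have hn : 2 ≤ n := by nlinarith [Fintype.one_lt_card (α := F)]
  have hK : Nat.card ((σ : F →+ F).eqLocus (.id F)) ≤ n :=
    (Nat.card_congr (Equiv.subtypeEquivRight fun x => by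
      change σ x = x ↔ _; rw [hσ, one_mul])).trans_le (card_pow_eq_mul_le hn 1)
  have hL : Nat.card ((σ : F →+ F).eqLocus (-.id F)) ≤ n :=
    (Nat.card_congr (Equiv.subtypeEquivRight fun x => by
      change σ x = -x ↔ _; rw [hσ, neg_one_mul])).trans_le (card_pow_eq_mul_le hn (-1))
  have hKL := Nat.card_congr
    (σ.eqLocusProdEquivOfInvolutive (involutive_of_card_eq_sq hF hσ) h2).toEquiv
  rw [Nat.card_prod, Nat.card_eq_fintype_card, hF] at hKL
  constructor <;> nlinarith

lemma exists_units_pow_eq_iff_of_card_eq_sq (hn : Odd n) {w : F} (hw : w ≠ 0) :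
    (∃ x : Fˣ, w = x ^ ((n + 1) / 2)) ↔ w ^ n = w ∨ w ^ n = -w := by
  have hn0 : n ≠ 0 := hn.pos.ne'
  have hcard : Nat.card Fˣ = (n + 1) / 2 * (2 * (n - 1)) := by
    rw [Nat.card_eq_fintype_card, Fintype.card_units, hF]
    obtain ⟨j, rfl⟩ := hn
    rw [show (2 * j + 1 + 1) / 2 = j + 1 by omega, Nat.add_sub_cancel]
    exact Nat.sub_eq_of_eq_add (by ring)
  have hpow := IsCyclic.exists_pow_eq_iff_pow_eq_one (Dvd.intro _ hcard.symm) (Units.mk0 w hw)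
  rw [hcard, Nat.mul_div_cancel_left _ (by omega)] at hpow
  have hmul : ∀ c : F, w ^ (n - 1) = c ↔ w ^ n = c * w := fun c => by
    rw [← pow_sub_one_mul hn0, mul_left_inj' hw]
  calc (∃ x : Fˣ, w = x ^ ((n + 1) / 2))
      ↔ Units.mk0 w hw ^ (2 * (n - 1)) = 1 := by
        simp only [← hpow, Units.ext_iff, Units.val_pow_eq_pow_val, Units.val_mk0, eq_comm]
    _ ↔ w ^ (n - 1) * w ^ (n - 1) = 1 := by
        rw [Units.ext_iff, Units.val_pow_eq_pow_val, Units.val_mk0, two_mul, pow_add,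
          Units.val_one]
    _ ↔ w ^ (n - 1) = 1 ∨ w ^ (n - 1) = -1 := mul_self_eq_one_iff
    _ ↔ w ^ n = w ∨ w ^ n = -w := by rw [hmul, hmul, one_mul, neg_one_mul]

end FiniteField

lemma gpGraph_adj_iff_of_card_eq_sq {F : Type} [Field F] [Fintype F] {n : ℕ}
    (hF : Fintype.card F = n ^ 2) (hn : Odd n) (u v : F) :
    (gpGraph F ((n + 1) / 2)).Adj u v ↔
      u ≠ v ∧ ((v - u) ^ n = v - u ∨ (v - u) ^ n = -(v - u)) := by
  rw [gpGraph, SimpleGraph.fromRel_adj, and_congr_right_iff]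
  intro huv
  rw [FiniteField.exists_units_pow_eq_iff_of_card_eq_sq hF hn (sub_ne_zero.mpr huv.symm),
    FiniteField.exists_units_pow_eq_iff_of_card_eq_sq hF hn (sub_ne_zero.mpr huv),
    ← neg_sub v u, hn.neg_pow, neg_inj, neg_neg, neg_eq_iff_eq_neg]
  tauto

theorem stmt_14_general (p m : ℕ) (hp : p.Prime) (hpodd : Odd p)
    (F : Type) [Field F] [Fintype F] (hF : Fintype.card F = p ^ (2 * m)) :
    Nonempty
      (gpGraph F ((p ^ m + 1) / 2) ≃g
        SimpleGraph.boxProd (⊤ : SimpleGraph (Fin (p ^ m)))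
          (⊤ : SimpleGraph (Fin (p ^ m)))) := by
  have : Fact p.Prime := ⟨hp⟩
  have : CharP F p := charP_of_card_eq_prime_pow hF
  have hF' : Fintype.card F = (p ^ m) ^ 2 := by rw [hF, ← pow_mul, mul_comm]
  have h2 : (2 : F) ≠ 0 :=
    Ring.two_ne_zero (by rw [ringChar.eq F p]; exact hpodd.ne_two_of_dvd_nat dvd_rfl)
  set σ := iterateFrobenius F p m
  have hσ : ∀ x, σ x = x ^ p ^ m := iterateFrobenius_def p m
  set e := σ.eqLocusProdEquivOfInvolutive (FiniteField.involutive_of_card_eq_sq hF' hσ) h2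
  obtain ⟨hK, hL⟩ := FiniteField.card_eqLocus_eq_of_card_eq_sq hF' σ hσ h2
  refine ⟨(SimpleGraph.Iso.boxProdTopOfAddEquiv _ e fun u v => ?_).trans <|
    SimpleGraph.Iso.boxProd (.completeGraph (Finite.equivFinOfCardEq hK))
      (.completeGraph (Finite.equivFinOfCardEq hL))⟩
  rw [gpGraph_adj_iff_of_card_eq_sq hF' hpodd.pow,
    RingHom.eqLocusProdEquivOfInvolutive_fst_eq_zero_iff,
    RingHom.eqLocusProdEquivOfInvolutive_snd_eq_zero_iff, hσ, or_comm]

theorem stmt_14 (p m : ℕ) (hp : p.Prime) (hpodd : Odd p) (hm : 0 < m)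
    (F : Type) [Field F] [Fintype F] (hF : Fintype.card F = p ^ (2 * m)) :
    Nonempty
      (gpGraph F ((p ^ m + 1) / 2) ≃g
        SimpleGraph.boxProd (⊤ : SimpleGraph (Fin (p ^ m)))
          (⊤ : SimpleGraph (Fin (p ^ m)))) :=
  stmt_14_general p m hp hpodd F hF
end

section
/- Let q = p^m with p prime, p ≡ 1 (mod 4) and m even, and set n = (q − 1)/4. Then the simple graph Γ(4, q) is Ramanujan: it is connected and n-regular, and every eigenvalue λ of its adjacency matrix with λ ≠ n satisfies |λ| ≤ 2√(n − 1). -/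
/-!
`Γ(4, q)` is the Cayley graph of `(𝔽_q, +)` on the set `R_4` of nonzero fourth powers, which is
closed under negation because `8 ∣ q - 1` makes `-1` a fourth power. The additive characters `ψ`
diagonalise its adjacency matrix, with eigenvalues the Gaussian periods `∑_{a ∈ R_4} ψ a`; the
trivial character gives `n = #R_4`. For `ψ ≠ 1` and a quartic multiplicative character `χ`,
`4 ∑_{a ∈ R_4} ψ a = ∑_{j < 4} g(χ ^ j, ψ)` is `-1` plus three Gauss sums of absolute value `√q`,
so each other eigenvalue has absolute value at most `(1 + 3√q) / 4 ≤ √(q - 5) = 2√(n - 1)` once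
`q ≥ 25`. The graph is connected because the additive subgroup generated by `R_4` has more than
`q / p` elements, so it is all of `𝔽_q`.
-/

open Polynomial Finset
open scoped Classical

open Matrix

theorem Matrix.spectrum_eq_range_of_basis_mulVec {K n ι : Type*} [Field K] [Fintype n]
    [DecidableEq n] [Fintype ι] [DecidableEq ι] (A : Matrix n n K) (b : Module.Basis ι K (n → K))
    (d : ι → K) (hb : ∀ i, A *ᵥ b i = d i • b i) :
    spectrum K A = Set.range d := by
  have hdiag : LinearMap.toMatrix b b (toLin' A) = diagonal d := by
    ext i j
    rw [LinearMap.toMatrix_apply, toLin'_apply, hb, map_smul, b.repr_self, diagonal_apply,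
      Finsupp.smul_apply, Finsupp.single_apply, smul_eq_mul]
    split_ifs <;> simp_all [eq_comm]
  rw [← spectrum_toLin', ← LinearMap.spectrum_toMatrix _ b, hdiag, spectrum_diagonal]

namespace SimpleGraph

variable {G : Type*}

lemma addCayley_reachable_add [AddGroup G] (s : Set G) (u : G) {g : G} (hg : g ∈ s) :
    (addCayley s).Reachable u (u + g) := by
  by_cases h : u = u + g
  · rw [← h]
  · exact Adj.reachable ((addCayley_adj' s u (u + g)).mpr ⟨h, g, hg, Or.inl rfl⟩)

theorem addCayley_connected [AddGroup G] {s : Set G} (hs : AddSubgroup.closure s = ⊤) :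
    (addCayley s).Connected := by
  have reach : ∀ x, (addCayley s).Reachable 0 x := fun x => by
    induction (hs ▸ AddSubgroup.mem_top x : x ∈ AddSubgroup.closure s)
      using AddSubgroup.closure_induction_right with
    | zero => rfl
    | add_right y _ g hg ih => exact ih.trans (addCayley_reachable_add s y hg)
    | add_neg_cancel y _ g hg ih =>
      exact ih.trans (by simpa using (addCayley_reachable_add s (y + -g) hg).symm)
  exact (connected_iff _).mpr ⟨fun u v => (reach u).symm.trans (reach v), ⟨0⟩⟩

variable [AddCommGroup G] {S : Finset G}

lemma addCayley_adj_iff_sub_mem (hneg : ∀ a ∈ S, -a ∈ S) (hzero : (0 : G) ∉ S) (u v : G) :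
    (addCayley (S : Set G)).Adj u v ↔ v - u ∈ S := by
  rw [addCayley_adj]
  constructor
  · rintro ⟨-, h | h⟩
    · rwa [neg_add_eq_sub] at h
    · simpa [neg_add_eq_sub] using hneg _ h
  · intro h
    exact ⟨fun huv => hzero (by simpa [huv] using h), Or.inl (by rwa [neg_add_eq_sub])⟩

variable [Fintype G] [DecidableRel (addCayley (S : Set G)).Adj]

lemma neighborFinset_addCayley (hneg : ∀ a ∈ S, -a ∈ S) (hzero : (0 : G) ∉ S) (u : G) :
    (addCayley (S : Set G)).neighborFinset u = S.map (addLeftEmbedding u) := by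
  ext v
  simp [addCayley_adj_iff_sub_mem hneg hzero, ← eq_sub_iff_add_eq']

theorem addCayley_isRegularOfDegree (hneg : ∀ a ∈ S, -a ∈ S) (hzero : (0 : G) ∉ S) :
    (addCayley (S : Set G)).IsRegularOfDegree #S := fun u => by
  rw [← card_neighborFinset_eq_degree, neighborFinset_addCayley hneg hzero, card_map]

lemma adjMatrix_addCayley_mulVec_addChar (hneg : ∀ a ∈ S, -a ∈ S) (hzero : (0 : G) ∉ S)
    (ψ : AddChar G ℂ) :
    (addCayley (S : Set G)).adjMatrix ℂ *ᵥ ⇑ψ = (∑ a ∈ S, ψ a) • ⇑ψ := by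
  ext u
  simp [adjMatrix_mulVec_apply, neighborFinset_addCayley hneg hzero, AddChar.map_add_eq_mul,
    ← Finset.mul_sum, mul_comm]

theorem spectrum_adjMatrix_addCayley (hneg : ∀ a ∈ S, -a ∈ S) (hzero : (0 : G) ∉ S) :
    spectrum ℂ ((addCayley (S : Set G)).adjMatrix ℂ) =
      Set.range fun ψ : AddChar G ℂ => ∑ a ∈ S, ψ a := by
  refine spectrum_eq_range_of_basis_mulVec _ (AddChar.complexBasis G) _ fun ψ => ?_
  rw [AddChar.complexBasis_apply, adjMatrix_addCayley_mulVec_addChar hneg hzero]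

end SimpleGraph

theorem AddSubgroup.eq_top_of_card_lt_prime_mul {G : Type*} [AddGroup G] {p m : ℕ} (hp : p.Prime)
    (hG : Nat.card G = p ^ m) (H : AddSubgroup G) (hH : Nat.card G < p * Nat.card H) :
    H = ⊤ := by
  obtain ⟨j, -, hj⟩ := (Nat.dvd_prime_pow hp).mp (hG ▸ H.index_dvd_card)
  rcases j with _ | j
  · exact AddSubgroup.index_eq_one.mp hj
  · have hcard := H.card_mul_index
    rw [hj, pow_succ] at hcard
    nlinarith [hp.two_le, Nat.one_le_pow j p hp.pos]

lemma AddSubgroup.card_add_one_le_card_closure {G : Type*} [AddGroup G] [Finite G] {S : Finset G}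
    (hzero : (0 : G) ∉ S) : #S + 1 ≤ Nat.card (AddSubgroup.closure (S : Set G)) := by
  have hsub : ((insert 0 S : Finset G) : Set G) ⊆ AddSubgroup.closure (S : Set G) := by
    rw [Finset.coe_insert, Set.insert_subset_iff]
    exact ⟨zero_mem _, AddSubgroup.subset_closure⟩
  rw [← card_insert_of_notMem hzero, ← Nat.card_eq_finsetCard]
  exact Nat.card_mono (Set.toFinite _) hsub

section PowerResidues

variable (F : Type*) [Field F] [Fintype F]

noncomputable def unitPowers (k : ℕ) : Finset F :=
  univ.filter fun a => ∃ x : Fˣ, a = (x : F) ^ k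

variable {F}

lemma mem_unitPowers {k : ℕ} {a : F} : a ∈ unitPowers F k ↔ ∃ x : Fˣ, a = (x : F) ^ k := by
  simp [unitPowers]

lemma zero_notMem_unitPowers (k : ℕ) : (0 : F) ∉ unitPowers F k := by
  rw [mem_unitPowers]
  rintro ⟨x, hx⟩
  exact pow_ne_zero k x.ne_zero hx.symm

lemma neg_one_mem_unitPowers {k : ℕ} (hk : 2 * k ∣ Fintype.card F - 1) :
    (-1 : F) ∈ unitPowers F k := by
  obtain ⟨g, hg⟩ := IsCyclic.exists_ofOrder_eq_natCard (α := Fˣ)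
  rw [Nat.card_eq_fintype_card, Fintype.card_units] at hg
  obtain ⟨r, hr⟩ := hk
  have hpos : 0 < Fintype.card F - 1 := Nat.sub_pos_of_lt Fintype.one_lt_card
  have hprim : IsPrimitiveRoot ((g : F) ^ (k * r)) 2 :=
    (orderOf_units (y := g) ▸ IsPrimitiveRoot.orderOf (g : F)).pow (hg ▸ hpos)
      (by rw [hg, hr]; ring)
  exact mem_unitPowers.mpr ⟨g ^ r, by
    rw [Units.val_pow_eq_pow_val, ← pow_mul, mul_comm, hprim.eq_neg_one_of_two_right]⟩

lemma neg_mem_unitPowers {k : ℕ} (hk : 2 * k ∣ Fintype.card F - 1) {a : F}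
    (ha : a ∈ unitPowers F k) : -a ∈ unitPowers F k := by
  obtain ⟨x, rfl⟩ := mem_unitPowers.mp ha
  obtain ⟨y, hy⟩ := mem_unitPowers.mp (neg_one_mem_unitPowers hk)
  exact mem_unitPowers.mpr ⟨y * x, by push_cast; rw [mul_pow, ← hy, neg_one_mul]⟩

lemma card_unitPowers {k : ℕ} (hk : k ∣ Fintype.card F - 1) :
    #(unitPowers F k) = (Fintype.card F - 1) / k := by
  have himage : (unitPowers F k : Set F) = Units.val '' (powMonoidHom k : Fˣ →* Fˣ).range := by
    ext a
    simp [mem_unitPowers, eq_comm]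
  rw [← Nat.card_eq_finsetCard, ← SetLike.coe_sort_coe, himage,
    Nat.card_image_of_injective Units.val_injective, SetLike.coe_sort_coe,
    IsCyclic.card_powMonoidHom_range, Nat.card_eq_fintype_card, Fintype.card_units,
    Nat.gcd_eq_right hk]

end PowerResidues

section CharacterSums

lemma MulChar.sum_range_pow_apply {R K : Type*} [CommMonoidWithZero R] [Field K]
    {χ : MulChar R K} {k : ℕ} (hχ : χ ^ k = 1) (a : R) :
    ∑ j ∈ range k, (χ ^ j) a = if χ a = 1 then (k : K) else 0 := by
  by_cases ha : IsUnit a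
  · obtain ⟨u, rfl⟩ := ha
    simp_rw [MulChar.pow_apply_coe]
    split_ifs with h1
    · simp [h1]
    · rw [geom_sum_eq h1, ← MulChar.pow_apply_coe, hχ, MulChar.one_apply_coe, sub_self, zero_div]
  · simp [MulChar.map_nonunit _ ha]

variable {F : Type*} [Field F] [Fintype F] {χ : MulChar F ℂ} {k : ℕ}

lemma MulChar.mul_card_filter_apply_eq_one (hχ : orderOf χ = k) :
    k * #{a | χ a = 1} = Fintype.card F - 1 := by
  have hk : 0 < k := hχ ▸ (isOfFinOrder_of_finite χ).orderOf_pos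
  have hsum : ∑ j ∈ range k, ∑ a, (χ ^ j) a = ((Fintype.card F - 1 : ℕ) : ℂ) := by
    rw [Finset.sum_eq_single_of_mem 0 (mem_range.mpr hk), pow_zero, MulChar.sum_one_eq_card_units,
      Fintype.card_units]
    intro j hj hj0
    exact MulChar.sum_eq_zero_of_ne_one (pow_ne_one_of_lt_orderOf hj0 (hχ ▸ mem_range.mp hj))
  rw [Finset.sum_comm] at hsum
  simp_rw [MulChar.sum_range_pow_apply (hχ ▸ pow_orderOf_eq_one χ), Finset.sum_ite,
    Finset.sum_const_zero, add_zero, Finset.sum_const, nsmul_eq_mul, mul_comm] at hsum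
  exact_mod_cast hsum

/-- `χ` kills every `k`-th power, and both sets have `(q - 1) / k` elements. -/
lemma MulChar.filter_apply_eq_one (hχ : orderOf χ = k) :
    ({a | χ a = 1} : Finset F) = unitPowers F k := by
  have hk : 0 < k := hχ ▸ (isOfFinOrder_of_finite χ).orderOf_pos
  have hsub : unitPowers F k ⊆ ({a | χ a = 1} : Finset F) := fun a ha => by
    obtain ⟨x, rfl⟩ := mem_unitPowers.mp ha
    rw [mem_filter, map_pow, ← MulChar.pow_apply_coe, ← hχ, pow_orderOf_eq_one,
      MulChar.one_apply_coe]
    exact ⟨mem_univ _, rfl⟩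
  refine (Finset.eq_of_subset_of_card_le hsub ?_).symm
  rw [card_unitPowers (hχ ▸ χ.orderOf_dvd_card_sub_one), ← MulChar.mul_card_filter_apply_eq_one hχ,
    Nat.mul_div_cancel_left _ hk]

theorem MulChar.mul_sum_unitPowers_eq_sum_gaussSum (hχ : orderOf χ = k) (ψ : AddChar F ℂ) :
    (k : ℂ) * ∑ a ∈ unitPowers F k, ψ a = ∑ j ∈ range k, gaussSum (χ ^ j) ψ := by
  simp only [gaussSum, ← Finset.sum_mul, Finset.sum_comm (s := range k)]
  simp_rw [MulChar.sum_range_pow_apply (hχ ▸ pow_orderOf_eq_one χ), ite_mul, zero_mul,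
    ← Finset.sum_filter, MulChar.filter_apply_eq_one hχ, Finset.mul_sum]

theorem norm_gaussSum (hχ : χ ≠ 1) {ψ : AddChar F ℂ} (hψ : ψ ≠ 1) :
    ‖gaussSum χ ψ‖ = √(Fintype.card F) := by
  have hmul : gaussSum χ ψ * star (gaussSum χ ψ) = Fintype.card F := by
    rw [star_gaussSum_eq]
    exact gaussSum_mul_gaussSum_eq_card hχ (AddChar.IsPrimitive.of_ne_one hψ)
  have hsq : ‖gaussSum χ ψ‖ ^ 2 = Fintype.card F := by
    rw [Complex.sq_norm]
    exact_mod_cast (Complex.mul_conj _).symm.trans hmul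
  rw [← hsq, Real.sqrt_sq (norm_nonneg _)]

end CharacterSums

theorem norm_sum_unitPowers_le {F : Type*} [Field F] [Fintype F] {k : ℕ}
    (hk : k ∣ Fintype.card F - 1) {ψ : AddChar F ℂ} (hψ : ψ ≠ 1) :
    ‖∑ a ∈ unitPowers F k, ψ a‖ ≤ (1 + (k - 1) * √(Fintype.card F)) / k := by
  have hk0 : 0 < k := Nat.pos_of_dvd_of_pos hk (Nat.sub_pos_of_lt Fintype.one_lt_card)
  obtain ⟨χ, hχ⟩ := MulChar.exists_mulChar_orderOf F hk (Complex.isPrimitiveRoot_exp k hk0.ne')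
  have hnorm : ∀ j ∈ range k, ‖gaussSum (χ ^ j) ψ‖ = if j = 0 then 1 else √(Fintype.card F) :=
    fun j hj => by
      split_ifs with hj0
      · rw [hj0, pow_zero, gaussSum_one_left hψ, norm_neg, norm_one]
      · exact norm_gaussSum (pow_ne_one_of_lt_orderOf hj0 (hχ ▸ mem_range.mp hj)) hψ
  rw [le_div_iff₀ (by positivity), mul_comm]
  calc (k : ℝ) * ‖∑ a ∈ unitPowers F k, ψ a‖
      = ‖∑ j ∈ range k, gaussSum (χ ^ j) ψ‖ := by
        rw [← MulChar.mul_sum_unitPowers_eq_sum_gaussSum hχ, norm_mul, Complex.norm_natCast]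
    _ ≤ ∑ j ∈ range k, ‖gaussSum (χ ^ j) ψ‖ := norm_sum_le _ _
    _ = 1 + (k - 1) * √(Fintype.card F) := by
        rw [Finset.sum_congr rfl hnorm, Finset.sum_ite, Finset.sum_const, Finset.sum_const,
          Finset.filter_eq', if_pos (mem_range.mpr hk0), Finset.filter_ne',
          card_erase_of_mem (mem_range.mpr hk0), card_range, card_singleton, one_smul,
          nsmul_eq_mul, Nat.cast_pred hk0]

lemma one_add_three_mul_sqrt_div_four_le {n : ℝ} (hn : 6 ≤ n) :
    (1 + 3 * √(4 * n + 1)) / 4 ≤ 2 * √(n - 1) := by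
  have hsq : √(4 * n + 1) ^ 2 = 4 * n + 1 := Real.sq_sqrt (by linarith)
  have hs : 5 ≤ √(4 * n + 1) := Real.le_sqrt_of_sq_le (by linarith)
  have htwo : 2 * √(n - 1) = √(4 * n - 4) := by
    rw [show 4 * n - 4 = 2 ^ 2 * (n - 1) by ring, Real.sqrt_mul (by positivity),
      Real.sqrt_sq (by norm_num)]
  rw [htwo]
  exact Real.le_sqrt_of_sq_le (by nlinarith)

lemma Nat.eight_dvd_pow_sub_one_of_even {p m : ℕ} (hp : Odd p) (hm : Even m) : 8 ∣ p ^ m - 1 := by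
  obtain ⟨r, rfl⟩ := hm
  rw [← two_mul, pow_mul']
  exact Nat.eight_dvd_sq_sub_one_of_odd hp.pow

section PaleyGraph

open SimpleGraph

variable {F : Type} [Field F] [Fintype F] {k : ℕ}

variable (F k) in
lemma gpGraph_eq_addCayley_s19 : gpGraph F k = addCayley (unitPowers F k : Set F) := by
  ext u v
  simp [gpGraph, addCayley_adj, mem_unitPowers, neg_add_eq_sub, eq_comm]

theorem gpGraph_connected {p m : ℕ} (hp : p.Prime) (hF : Fintype.card F = p ^ m)
    (hk : k ∣ Fintype.card F - 1) (hkp : k < p) : (gpGraph F k).Connected := by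
  rw [gpGraph_eq_addCayley_s19]
  refine addCayley_connected <|
    AddSubgroup.eq_top_of_card_lt_prime_mul hp (Nat.card_eq_fintype_card.trans hF) _ ?_
  have hclosure := AddSubgroup.card_add_one_le_card_closure (zero_notMem_unitPowers (F := F) k)
  have hq := Fintype.one_lt_card (α := F)
  obtain ⟨t, ht⟩ := hk
  have hk0 : 0 < k := Nat.pos_of_ne_zero (by rintro rfl; omega)
  rw [card_unitPowers ⟨t, ht⟩, ht, Nat.mul_div_cancel_left _ hk0] at hclosure
  rw [Nat.card_eq_fintype_card, show Fintype.card F = k * t + 1 by omega]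
  nlinarith [Nat.mul_le_mul (Nat.succ_le_of_lt hkp) hclosure]

theorem gpGraph_isRegularOfDegree (hk : 2 * k ∣ Fintype.card F - 1) :
    (gpGraph F k).IsRegularOfDegree ((Fintype.card F - 1) / k) := by
  rw [gpGraph_eq_addCayley_s19, ← card_unitPowers (dvd_of_mul_left_dvd hk)]
  convert addCayley_isRegularOfDegree (fun _ => neg_mem_unitPowers hk) (zero_notMem_unitPowers k)

theorem norm_le_of_mem_spectrum_gpGraph (hk : 2 * k ∣ Fintype.card F - 1) {μ : ℂ}
    (hμ : μ ∈ spectrum ℂ ((gpGraph F k).adjMatrix ℂ)) (hμn : μ ≠ ((Fintype.card F - 1) / k : ℕ)) :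
    ‖μ‖ ≤ (1 + (k - 1) * √(Fintype.card F)) / k := by
  have hdvd := dvd_of_mul_left_dvd hk
  replace hμ : μ ∈ spectrum ℂ ((addCayley (unitPowers F k : Set F)).adjMatrix ℂ) := by
    convert hμ using 3
    exact (gpGraph_eq_addCayley_s19 F k).symm
  obtain ⟨ψ, rfl⟩ := (spectrum_adjMatrix_addCayley (fun _ => neg_mem_unitPowers hk)
    (zero_notMem_unitPowers k)).subset hμ
  refine norm_sum_unitPowers_le hdvd fun hψ => hμn ?_
  simp [hψ, card_unitPowers hdvd]

end PaleyGraph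

theorem stmt_19_general (p m n : ℕ) (hp : p.Prime) (hp4 : p % 4 = 1)
    (hme : Even m)
    (F : Type) [Field F] [Fintype F] (hF : Fintype.card F = p ^ m)
    (hn : n = (p ^ m - 1) / 4) :
    (gpGraph F 4).Connected ∧
    (gpGraph F 4).IsRegularOfDegree n ∧
    ∀ μ ∈ spectrum ℂ
        (Matrix.of fun u v : F => if (gpGraph F 4).Adj u v then (1 : ℂ) else 0),
      μ ≠ (n : ℂ) → ‖μ‖ ≤ 2 * Real.sqrt ((n : ℝ) - 1) := by
  have hp5 : 5 ≤ p := by have := hp.two_le; omega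
  have h8 : 2 * 4 ∣ Fintype.card F - 1 :=
    hF ▸ Nat.eight_dvd_pow_sub_one_of_even (Nat.odd_iff.mpr (by omega)) hme
  rw [← hF] at hn
  have hq : Fintype.card F = 4 * n + 1 := by
    have := Fintype.one_lt_card (α := F)
    have := dvd_of_mul_left_dvd h8
    omega
  have hn6 : 6 ≤ n := by
    obtain ⟨r, rfl⟩ := hme
    have hr : r ≠ 0 := by rintro rfl; have := Fintype.one_lt_card (α := F); simp_all
    have : 5 ^ 2 ≤ p ^ (r + r) :=
      (Nat.pow_le_pow_left hp5 2).trans (Nat.pow_le_pow_right hp.pos (by omega))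
    omega
  refine ⟨gpGraph_connected hp hF (dvd_of_mul_left_dvd h8) (by omega),
    hn ▸ gpGraph_isRegularOfDegree h8, fun μ hμ hμn => ?_⟩
  calc ‖μ‖ ≤ _ := norm_le_of_mem_spectrum_gpGraph h8 hμ (hn ▸ hμn)
    _ = (1 + 3 * √(4 * n + 1)) / 4 := by rw [hq]; push_cast; ring
    _ ≤ 2 * √(n - 1) := one_add_three_mul_sqrt_div_four_le (by exact_mod_cast hn6)

theorem stmt_19 (p m n : ℕ) (hp : p.Prime) (hm : 0 < m) (hp4 : p % 4 = 1)
    (hme : Even m)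
    (F : Type) [Field F] [Fintype F] (hF : Fintype.card F = p ^ m)
    (hn : n = (p ^ m - 1) / 4) :
    (gpGraph F 4).Connected ∧
    (gpGraph F 4).IsRegularOfDegree n ∧
    ∀ μ ∈ spectrum ℂ
        (Matrix.of fun u v : F => if (gpGraph F 4).Adj u v then (1 : ℂ) else 0),
      μ ≠ (n : ℂ) → ‖μ‖ ≤ 2 * Real.sqrt ((n : ℝ) - 1) :=
  stmt_19_general p m n hp hp4 hme F hF hn
end
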